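/- The group invariant polynomial p(x,y) = x^19 + 19x^17y + 152x^15y^2 + 665x^13y^3 + 1729x^11y^4 + 2717x^9y^5 + 2508x^7y^6 + 1254x^5y^7 + 285x^3y^8 + 19xy^9 + y^19 satisfies p(x, 1-x) = 1 as a polynomial identity, has all coefficients nonnegative, and has exactly 11 nonzero terms with total degree 19 = 2·11 - 3. -/

import Mathlib

/-!
The identity `p(x, 1 - x) = 1` is a direct polynomial computation. For the remaining claims, `p`
is rewritten as a sum of monomials with pairwise distinct exponents and positive natural
coefficients; for such a sum the support is the set of exponents and the coefficients are the
given ones, so the count of terms and the total degree can be read off the list of exponents.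
-/

open MvPolynomial

noncomputable def p2 : MvPolynomial (Fin 2) ℝ :=
  X 0 ^ 19 + 19 * X 0 ^ 17 * X 1 + 152 * X 0 ^ 15 * X 1 ^ 2 + 665 * X 0 ^ 13 * X 1 ^ 3
    + 1729 * X 0 ^ 11 * X 1 ^ 4 + 2717 * X 0 ^ 9 * X 1 ^ 5 + 2508 * X 0 ^ 7 * X 1 ^ 6
    + 1254 * X 0 ^ 5 * X 1 ^ 7 + 285 * X 0 ^ 3 * X 1 ^ 8 + 19 * X 0 * X 1 ^ 9 + X 1 ^ 19

namespace MvPolynomial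

section SumMonomial

variable {σ ι R : Type*} [CommSemiring R] (s : Finset ι) {e : ι → σ →₀ ℕ} (c : ι → R)

theorem coeff_sum_monomial_of_injective [DecidableEq ι] (he : Function.Injective e) (j : ι) :
    coeff (e j) (∑ i ∈ s, monomial (e i) (c i)) = if j ∈ s then c j else 0 := by
  classical
  simp only [coeff_sum, coeff_monomial, he.eq_iff, Finset.sum_ite_eq']

theorem coeff_sum_monomial_of_notMem_range {m : σ →₀ ℕ} (hm : m ∉ Set.range e) :
    coeff m (∑ i ∈ s, monomial (e i) (c i)) = 0 := by
  classical
  refine (coeff_sum ..).trans (Finset.sum_eq_zero fun i _ => ?_)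
  rw [coeff_monomial, if_neg fun h => hm ⟨i, h⟩]

theorem support_sum_monomial_of_injective [DecidableEq σ] (he : Function.Injective e)
    (hc : ∀ i ∈ s, c i ≠ 0) :
    (∑ i ∈ s, monomial (e i) (c i)).support = s.image e := by
  classical
  ext m
  rw [mem_support_iff]
  by_cases hm : m ∈ Set.range e
  · obtain ⟨j, rfl⟩ := hm
    rw [coeff_sum_monomial_of_injective s c he, he.mem_finset_image]
    by_cases hj : j ∈ s <;> simp [hj, hc]
  · rw [coeff_sum_monomial_of_notMem_range s c hm]
    simpa using fun i _ h => hm ⟨i, h⟩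

theorem card_support_sum_monomial_of_injective [DecidableEq σ] (he : Function.Injective e)
    (hc : ∀ i ∈ s, c i ≠ 0) :
    (∑ i ∈ s, monomial (e i) (c i)).support.card = s.card := by
  rw [support_sum_monomial_of_injective s c he hc, Finset.card_image_of_injective s he]

theorem totalDegree_sum_monomial_of_injective (he : Function.Injective e)
    (hc : ∀ i ∈ s, c i ≠ 0) :
    (∑ i ∈ s, monomial (e i) (c i)).totalDegree = s.sup fun i => (e i).sum fun _ n => n := by
  classical
  rw [totalDegree, support_sum_monomial_of_injective s c he hc, Finset.sup_image]
  rfl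

theorem coeff_sum_monomial_nonneg [PartialOrder R] [IsOrderedRing R] (hc : ∀ i ∈ s, 0 ≤ c i)
    (m : σ →₀ ℕ) : 0 ≤ coeff m (∑ i ∈ s, monomial (e i) (c i)) := by
  classical
  rw [coeff_sum]
  refine Finset.sum_nonneg fun i hi => ?_
  rw [coeff_monomial]
  split_ifs
  exacts [hc i hi, le_rfl]

end SumMonomial

end MvPolynomial
noncomputable def bidegree (k : ℕ × ℕ) : Fin 2 →₀ ℕ :=
  Finsupp.single 0 k.1 + Finsupp.single 1 k.2

theorem bidegree_injective : Function.Injective bidegree := by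
  intro k l h
  have h0 := DFunLike.congr_fun h 0
  have h1 := DFunLike.congr_fun h 1
  simp only [bidegree, Finsupp.add_apply, Finsupp.single_apply] at h0 h1
  exact Prod.ext (by simpa using h0) (by simpa using h1)

theorem sum_bidegree (k : ℕ × ℕ) : ((bidegree k).sum fun _ n => n) = k.1 + k.2 := by
  simp [bidegree, Finsupp.sum_add_index, Finsupp.sum_single_index]

theorem monomial_bidegree {R : Type*} [CommSemiring R] (k : ℕ × ℕ) (r : R) :
    monomial (bidegree k) r = C r * X 0 ^ k.1 * X 1 ^ k.2 := by
  simp [monomial_eq, bidegree, Finsupp.prod_add_index, pow_add, mul_assoc]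

def p2Exponents : Fin 11 → ℕ × ℕ :=
  ![(19, 0), (17, 1), (15, 2), (13, 3), (11, 4), (9, 5), (7, 6), (5, 7), (3, 8), (1, 9), (0, 19)]

def p2Coeffs : Fin 11 → ℕ := ![1, 19, 152, 665, 1729, 2717, 2508, 1254, 285, 19, 1]

theorem p2_eq_sum_monomial :
    p2 = ∑ i, monomial (bidegree (p2Exponents i)) (p2Coeffs i : ℝ) := by
  simp only [p2, monomial_bidegree, Fin.sum_univ_succ, Fin.sum_univ_zero, p2Coeffs, p2Exponents, Matrix.cons_val_zero, Matrix.cons_val_one, Matrix.cons_val,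
    Fin.succ_zero_eq_one, Fin.succ_one_eq_two, Fin.reduceSucc, Nat.cast_one, Nat.cast_ofNat, C_1,
    map_ofNat, one_mul, pow_zero, pow_one, mul_one, add_zero]
  ring

theorem p2Exponents_injective : Function.Injective p2Exponents := by decide

theorem p2Coeffs_pos : ∀ i, 0 < p2Coeffs i := by decide

theorem sup_p2Exponents :
    (Finset.univ.sup fun i => (p2Exponents i).1 + (p2Exponents i).2) = 19 := by
  decide

theorem eval_p2_of_add_eq_one {x y : ℝ} (h : x + y = 1) : eval ![x, y] p2 = 1 := by
  obtain rfl : y = 1 - x := by linarith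
  simp only [p2, map_add, map_mul, map_pow, eval_X, eval_ofNat, Matrix.cons_val_zero,
    Matrix.cons_val_one, Matrix.cons_val_fin_one]
  ring

theorem stmt_2 :
    (∀ x y : ℝ, x + y = 1 → eval ![x, y] p2 = 1) ∧
    (∀ m, 0 ≤ p2.coeff m) ∧
    p2.support.card = 11 ∧ p2.totalDegree = 19 ∧ (19 : ℕ) = 2 * 11 - 3 := by
  have he : Function.Injective fun i => bidegree (p2Exponents i) :=
    bidegree_injective.comp p2Exponents_injective
  have hc : ∀ i ∈ Finset.univ, (p2Coeffs i : ℝ) ≠ 0 := fun i _ =>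
    Nat.cast_ne_zero.mpr (p2Coeffs_pos i).ne'
  refine ⟨fun _ _ => eval_p2_of_add_eq_one, fun m => ?_, ?_, ?_, rfl⟩
  · rw [p2_eq_sum_monomial]
    exact coeff_sum_monomial_nonneg _ _ (fun i _ => Nat.cast_nonneg _) m
  · rw [p2_eq_sum_monomial, card_support_sum_monomial_of_injective _ _ he hc]
    rfl
  · rw [p2_eq_sum_monomial, totalDegree_sum_monomial_of_injective _ _ he hc]
    simp only [sum_bidegree, sup_p2Exponents]
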